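/- If a rational relation R ⊆ Σ* × Γ* has the property that there exists n ∈ ℕ such that for every u ∈ dom(R) there is v ∈ Γ* with |v| ≤ n and (u,v) ∈ R, then R has a uniformization by a recognizable relation (e.g., the function mapping each u ∈ dom(R) to the length-lexicographically smallest v with (u,v) ∈ R, whose graph is recognizable). Conversely, if R has a uniformization by a recognizable relation, then such a bound n exists. -/

import Mathlib

/-!
Let `R = ⟦L⟧` with `L` regular. A DFA for `L` acts on output letters only through finitely many
state transformations, so replacing each output letter by a representative of its action keeps
`(u, v) ∈ R`. Hence, if outputs of length `≤ n` suffice, finitely many candidate outputs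
`v₁, …, vₘ` cover `dom R`. Each fibre `Fᵢ = {u | (u, vᵢ) ∈ R}` is regular by Myhill–Nerode, and
mapping `u` to the first `vᵢ` with `u ∈ Fᵢ` gives the recognizable uniformization
`⋃ᵢ (Fᵢ ∖ ⋃_{j<i} Fⱼ) × {vᵢ}`. Conversely, a recognizable relation `⋃ᵢ Uᵢ × Vᵢ` has, for every
input in its domain, an output among fixed representatives of the nonempty `Vᵢ`.
-/

open List

/-- A language is regular. -/
def IsReg {α : Type} (L : Set (List α)) : Prop := Language.IsRegular L

/-- Erase output letters: keep the Σ-part of a synchronization word. -/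
def piIn {σ γ : Type} (w : List (σ ⊕ γ)) : List σ := w.filterMap Sum.getLeft?
/-- Erase input letters: keep the Γ-part of a synchronization word. -/
def piOut {σ γ : Type} (w : List (σ ⊕ γ)) : List γ := w.filterMap Sum.getRight?
/-- `⟦w⟧`, the pair synchronized by `w`. -/
def syncPair {σ γ : Type} (w : List (σ ⊕ γ)) : List σ × List γ := (piIn w, piOut w)
/-- `⟦L⟧`, the relation defined by a synchronization language. -/
def syncRel {σ γ : Type} (L : Set (List (σ ⊕ γ))) : Set (List σ × List γ) := syncPair '' L

def rdom {σ γ : Type} (R : Set (List σ × List γ)) : Set (List σ) := {u | ∃ v, (u, v) ∈ R}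

/-- A recognizable relation: a finite union of products of regular languages. -/
def Recognizable {σ γ : Type} (R : Set (List σ × List γ)) : Prop :=
  ∃ (n : ℕ) (U : Fin n → Set (List σ)) (V : Fin n → Set (List γ)),
    (∀ i, IsReg (U i) ∧ IsReg (V i)) ∧
    R = ⋃ i, {p : List σ × List γ | p.1 ∈ U i ∧ p.2 ∈ V i}

/-- lag of the (1-based) position `i` of `w`. -/
def lagAt {σ γ : Type} (w : List (σ ⊕ γ)) (i : ℕ) : ℕ :=
  ((((w.take i).countP Sum.isLeft : ℕ) : ℤ) - (((w.take i).countP Sum.isRight : ℕ) : ℤ)).natAbs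

/-- maximal lag of a position of `w`. -/
def lagW {σ γ : Type} (w : List (σ ⊕ γ)) : ℕ := (Finset.range (w.length + 1)).sup (lagAt w)

/-- number of shifts of `w`. -/
def shiftCount {σ γ : Type} (w : List (σ ⊕ γ)) : ℕ :=
  (w.zip w.tail).countP fun p => p.1.isLeft != p.2.isLeft

/-- the (0-based) list of shift positions of `w`, in increasing order. -/
def shiftList {σ γ : Type} (w : List (σ ⊕ γ)) : List ℕ :=
  (List.range w.length).filter fun j =>
    decide (j + 1 < w.length) &&
      decide ((w[j]?).map Sum.isLeft ≠ (w[j + 1]?).map Sum.isLeft)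

/-- shiftlag of `w`: the largest `n` such that `w` has `n` consecutive shifts that are all
`≥n`-lagged. -/
noncomputable def shiftlagW {σ γ : Type} (w : List (σ ⊕ γ)) : ℕ :=
  sSup {n : ℕ | ∃ l : List ℕ, l <:+: shiftList w ∧ l.length = n ∧ ∀ j ∈ l, n ≤ lagAt w (j + 1)}

def FiniteShift {σ γ : Type} (L : Set (List (σ ⊕ γ))) : Prop := ∃ k, ∀ w ∈ L, shiftCount w ≤ k
def FiniteLag {σ γ : Type} (L : Set (List (σ ⊕ γ))) : Prop := ∃ k, ∀ w ∈ L, lagW w ≤ k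
def FiniteShiftlag {σ γ : Type} (L : Set (List (σ ⊕ γ))) : Prop := ∃ k, ∀ w ∈ L, shiftlagW w ≤ k

/-- left quotient `u⁻¹L`. -/
def leftQuot {α : Type} (u : List α) (L : Set (List α)) : Set (List α) := {z | u ++ z ∈ L}

/-- `w ⪯_T w'` : `w` is at most as synchronous as `w'` inside `T`. -/
def syncLe {σ γ : Type} (T : Set (List (σ ⊕ γ))) (w w' : List (σ ⊕ γ)) : Prop :=
  ∀ i : ℕ, FiniteShift (leftQuot (w'.take i) T) → FiniteShift (leftQuot (w.take i) T)

def allsync {σ γ : Type} (S T : Set (List (σ ⊕ γ))) : Set (List (σ ⊕ γ)) :=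
  {w | w ∈ T ∧ syncPair w ∈ syncRel S}

def maxsync {σ γ : Type} (S T : Set (List (σ ⊕ γ))) : Set (List (σ ⊕ γ)) :=
  {w | w ∈ T ∧ syncPair w ∈ syncRel S ∧
    ∀ w' ∈ T, syncPair w' = syncPair w → syncLe T w' w}

def minsync {σ γ : Type} (S T : Set (List (σ ⊕ γ))) : Set (List (σ ⊕ γ)) :=
  {w | w ∈ T ∧ syncPair w ∈ syncRel S ∧
    ∀ w' ∈ T, syncPair w' = syncPair w → syncLe T w w'}

/-- `Rel(T)`: relations definable by regular subsets of `T`. -/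
def RelOf {σ γ : Type} (T : Set (List (σ ⊕ γ))) : Set (Set (List σ × List γ)) :=
  {R | ∃ T' : Set (List (σ ⊕ γ)), T' ⊆ T ∧ IsReg T' ∧ syncRel T' = R}

/-- the canonical synchronization language `(ΣΓ)*(Σ* + Γ*)` of automatic relations. -/
def CanonAut (σ γ : Type) : Set (List (σ ⊕ γ)) :=
  {w | ∃ (p : List (σ × γ)) (x : List σ) (y : List γ),
    (x = [] ∨ y = []) ∧
    w = (p.flatMap fun ab => [Sum.inl ab.1, Sum.inr ab.2]) ++ x.map Sum.inl ++ y.map Sum.inr}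

/-- the canonical synchronization language `Σ*Γ*` of recognizable relations. -/
def InOut (σ γ : Type) : Set (List (σ ⊕ γ)) :=
  {w | ∃ (x : List σ) (y : List γ), w = x.map Sum.inl ++ y.map Sum.inr}

/-- An automatic relation: definable by a regular subset of `(ΣΓ)*(Σ* + Γ*)`. -/
def Automatic {σ γ : Type} (R : Set (List σ × List γ)) : Prop :=
  ∃ L : Set (List (σ ⊕ γ)), L ⊆ CanonAut σ γ ∧ IsReg L ∧ syncRel L = R

/-- `x` and `y` are compatible: equal length and extendable to a common pair. -/
def Compatible {σ γ : Type} (x y : List (σ ⊕ γ)) : Prop :=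
  x.length = y.length ∧ ∃ u v : List (σ ⊕ γ), syncPair (x ++ u) = syncPair (y ++ v)

/-- `diff(x,y) = (u,v)`: `u,v` are the shortest words with `⟦xu⟧ = ⟦yv⟧`. -/
def IsDiff {σ γ : Type} (x y u v : List (σ ⊕ γ)) : Prop :=
  syncPair (x ++ u) = syncPair (y ++ v) ∧
    ∀ u' v' : List (σ ⊕ γ), syncPair (x ++ u') = syncPair (y ++ v') →
      u.length ≤ u'.length ∧ v.length ≤ v'.length

section Regular

variable {α : Type}

theorem isReg_univ : IsReg (Set.univ : Set (List α)) := by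
  refine Language.isRegular_iff_finite_range_leftQuotient.mpr
    ((Set.finite_singleton Set.univ).subset ?_)
  rintro _ ⟨x, rfl⟩
  exact Set.eq_univ_of_forall fun _ => trivial

theorem IsReg.exists_dfa {L : Set (List α)} (h : IsReg L) :
    ∃ (Q : Type) (_ : Fintype Q) (M : DFA α Q), ∀ w, w ∈ L ↔ M.eval w ∈ M.accept := by
  obtain ⟨Q, _, M, rfl⟩ := h
  exact ⟨Q, inferInstance, M, fun _ => Iff.rfl⟩

theorem IsReg.inter {L L' : Set (List α)} (h : IsReg L) (h' : IsReg L') : IsReg (L ∩ L') :=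
  Language.IsRegular.inf h h'

theorem IsReg.compl {L : Set (List α)} (h : IsReg L) : IsReg Lᶜ :=
  Language.IsRegular.compl h

theorem isReg_biInter {ι : Type*} (s : Finset ι) {L : ι → Set (List α)}
    (h : ∀ i ∈ s, IsReg (L i)) : IsReg (⋂ i ∈ s, L i) := by
  classical
  induction s using Finset.induction_on with
  | empty => simpa using isReg_univ
  | insert i s _ ih =>
    rw [Finset.set_biInter_insert]
    exact (h i (Finset.mem_insert_self i s)).inter
      (ih fun j hj => h j (Finset.mem_insert_of_mem hj))

theorem Set.Finite.isReg {L : Set (List α)} (hL : L.Finite) : IsReg L := by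
  have hsuff : {y : List α | ∃ w ∈ L, y <:+ w}.Finite := by
    refine (hL.biUnion fun w _ => w.tails.finite_toSet).subset ?_
    rintro y ⟨w, hw, hy⟩
    exact Set.mem_biUnion hw (by simpa using hy)
  refine Language.isRegular_iff_finite_range_leftQuotient.mpr
    (hsuff.finite_subsets.subset ?_)
  rintro _ ⟨x, rfl⟩ y (hy : x ++ y ∈ L)
  exact ⟨_, hy, List.suffix_append x y⟩

end Regular

section Sync

variable {σ γ : Type}

theorem piIn_append (w w' : List (σ ⊕ γ)) : piIn (w ++ w') = piIn w ++ piIn w' :=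
  List.filterMap_append

theorem piOut_append (w w' : List (σ ⊕ γ)) : piOut (w ++ w') = piOut w ++ piOut w' :=
  List.filterMap_append

theorem piIn_map_sumMap {σ' γ' : Type} (f : σ → σ') (g : γ → γ') (w : List (σ ⊕ γ)) :
    piIn (w.map (Sum.map f g)) = (piIn w).map f := by
  rw [piIn, piIn, List.filterMap_map, List.map_filterMap]
  congr 1
  funext x
  cases x <;> rfl

theorem piOut_map_sumMap {σ' γ' : Type} (f : σ → σ') (g : γ → γ') (w : List (σ ⊕ γ)) :
    piOut (w.map (Sum.map f g)) = (piOut w).map g := by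
  rw [piOut, piOut, List.filterMap_map, List.map_filterMap]
  congr 1
  funext x
  cases x <;> rfl

theorem mem_syncRel {L : Set (List (σ ⊕ γ))} {u : List σ} {v : List γ} :
    (u, v) ∈ syncRel L ↔ ∃ w ∈ L, piIn w = u ∧ piOut w = v := by
  simp [syncRel, syncPair]

/-- A word over `x ++ y` splits as `w₁ ++ w₂` over `x` and `y`, so the left quotient by `x` only
depends on the finitely many pairs (state after `w₁`, length of the output read by `w₁`). -/
theorem isReg_fiber {L : Set (List (σ ⊕ γ))} (hL : IsReg L) (v : List γ) :
    IsReg {u | (u, v) ∈ syncRel L} := by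
  obtain ⟨Q, _, M, hmem⟩ := hL.exists_dfa
  set reach : List σ → Set (Q × ℕ) := fun x =>
    {p | ∃ w₁, piIn w₁ = x ∧ piOut w₁ <+: v ∧ p = (M.eval w₁, (piOut w₁).length)}
  set tail : Q × ℕ → Set (List σ) := fun p =>
    {y | ∃ w₂, piIn w₂ = y ∧ piOut w₂ = v.drop p.2 ∧ M.evalFrom p.1 w₂ ∈ M.accept}
  have hquot :
      ∀ x, Language.leftQuotient {u | (u, v) ∈ syncRel L} x = ⋃ p ∈ reach x, tail p := by
    intro x
    ext y
    change (x ++ y, v) ∈ syncRel L ↔ y ∈ ⋃ p ∈ reach x, tail p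
    simp only [mem_syncRel, hmem, Set.mem_iUnion₂, exists_prop]
    constructor
    · rintro ⟨w, hw, hin, hout⟩
      obtain ⟨w₁, w₂, rfl, hx, hy⟩ := List.filterMap_eq_append_iff.mp hin
      rw [piOut_append] at hout
      refine ⟨_, ⟨w₁, hx, hout ▸ List.prefix_append _ _, rfl⟩, w₂, hy, ?_, ?_⟩
      · simp [← hout]
      · rwa [DFA.eval, ← DFA.evalFrom_of_append]
    · rintro ⟨_, ⟨w₁, rfl, hpre, rfl⟩, w₂, rfl, hout, hacc⟩
      refine ⟨w₁ ++ w₂, ?_, piIn_append _ _, ?_⟩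
      · rwa [DFA.eval, DFA.evalFrom_of_append]
      · rw [piOut_append, hout]
        exact List.prefix_iff_eq_append.mp hpre
  have hreach : ∀ x, reach x ⊆ Set.univ ×ˢ Set.Iic v.length := by
    rintro x _ ⟨w₁, -, hpre, rfl⟩
    exact ⟨trivial, hpre.length_le⟩
  refine Language.isRegular_iff_finite_range_leftQuotient.mpr
    ((((Set.finite_univ.prod (Set.finite_Iic v.length)).finite_subsets).image
      fun S => ⋃ p ∈ S, tail p).subset ?_)
  rintro _ ⟨x, rfl⟩
  exact ⟨reach x, hreach x, (hquot x).symm⟩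

/-- Output letters with the same action on the states of an automaton for `L` are
interchangeable, and there are only finitely many such actions. -/
theorem exists_finite_range_map_mem_syncRel {L : Set (List (σ ⊕ γ))} (hL : IsReg L) :
    ∃ r : γ → γ, (Set.range r).Finite ∧
      ∀ {u v}, (u, v) ∈ syncRel L → (u, v.map r) ∈ syncRel L := by
  obtain ⟨Q, _, M, hmem⟩ := hL.exists_dfa
  set act : γ → Q → Q := fun c q => M.step q (.inr c)
  set r := Set.rangeSplitting act ∘ Set.rangeFactorization act
  have hact : ∀ c, act (r c) = act c := fun c => Set.apply_rangeSplitting act _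
  have heval : ∀ w q, M.evalFrom q (w.map (Sum.map id r)) = M.evalFrom q w := by
    intro w
    induction w with
    | nil => exact fun _ => rfl
    | cons x w ih =>
      intro q
      cases x with
      | inl a => exact ih _
      | inr c => exact (ih _).trans (congrArg (M.evalFrom · w) (congrFun (hact c) q))
  refine ⟨r, (Set.finite_range _).subset (Set.range_comp_subset_range _ _), ?_⟩
  simp only [mem_syncRel]
  rintro u v ⟨w, hw, rfl, rfl⟩
  refine ⟨w.map (Sum.map id r), ?_, by simp [piIn_map_sumMap], piOut_map_sumMap _ _ _⟩
  rw [hmem, DFA.eval, heval]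
  exact (hmem w).mp hw

theorem exists_recognizable_uniformization_of_cover {R : Set (List σ × List γ)} {m : ℕ}
    (v : Fin m → List γ) (hreg : ∀ i, IsReg {u | (u, v i) ∈ R})
    (hcover : ∀ u ∈ rdom R, ∃ i, (u, v i) ∈ R) :
    ∃ Rf, Recognizable Rf ∧ Rf ⊆ R ∧ ∀ u ∈ rdom R, ∃! w, (u, w) ∈ Rf := by
  set U : Fin m → Set (List σ) := fun i =>
    {u | (u, v i) ∈ R} ∩ ⋂ j ∈ Finset.univ.filter (· < i), {u | (u, v j) ∈ R}ᶜ
  have hU : ∀ {u i}, u ∈ U i ↔ (u, v i) ∈ R ∧ ∀ j < i, (u, v j) ∉ R := by simp [U]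
  refine ⟨⋃ i, {p | p.1 ∈ U i ∧ p.2 ∈ ({v i} : Set (List γ))},
    ⟨m, U, fun i => {v i}, fun i => ⟨(hreg i).inter (isReg_biInter _ fun j _ => (hreg j).compl),
      (Set.finite_singleton _).isReg⟩, rfl⟩, ?_, ?_⟩
  · rintro ⟨u, w⟩ hp
    obtain ⟨i, hu, rfl : w = v i⟩ := Set.mem_iUnion.mp hp
    exact (hU.mp hu).1
  · intro u hu
    obtain ⟨i, hi, hmin⟩ := wellFounded_lt.has_min {i | (u, v i) ∈ R} (hcover u hu)
    refine ⟨v i, Set.mem_iUnion.mpr ⟨i, hU.mpr ⟨hi, fun j hj hj' => hmin j hj' hj⟩, rfl⟩, ?_⟩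
    rintro w hw
    obtain ⟨j, hj, rfl : w = v j⟩ := Set.mem_iUnion.mp hw
    obtain ⟨hjR, hjmin⟩ := hU.mp hj
    rw [le_antisymm (not_lt.mp fun h => hjmin i h hi) (not_lt.mp (hmin j hjR))]

theorem exists_recognizable_uniformization_of_finite_cover {R : Set (List σ × List γ)}
    (C : Set (List γ)) (hC : C.Finite) (hreg : ∀ w ∈ C, IsReg {u | (u, w) ∈ R})
    (hcover : ∀ u ∈ rdom R, ∃ w ∈ C, (u, w) ∈ R) :
    ∃ Rf, Recognizable Rf ∧ Rf ⊆ R ∧ ∀ u ∈ rdom R, ∃! w, (u, w) ∈ Rf := by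
  have := hC.to_subtype
  obtain ⟨m, ⟨e⟩⟩ := Finite.exists_equiv_fin C
  refine exists_recognizable_uniformization_of_cover (fun i => (e.symm i : List γ))
    (fun i => hreg _ (e.symm i).2) fun u hu => ?_
  obtain ⟨w, hw, huw⟩ := hcover u hu
  exact ⟨e ⟨w, hw⟩, by simpa using huw⟩

theorem Recognizable.exists_length_le {Rf : Set (List σ × List γ)} (h : Recognizable Rf) :
    ∃ n, ∀ u ∈ rdom Rf, ∃ v : List γ, v.length ≤ n ∧ (u, v) ∈ Rf := by
  obtain ⟨m, U, V, -, rfl⟩ := h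
  have hpick : ∀ i, ∃ v : List γ, ∀ v' ∈ V i, v ∈ V i := fun i =>
    (V i).eq_empty_or_nonempty.elim (fun h => ⟨[], by simp [h]⟩) fun ⟨v, hv⟩ => ⟨v, fun _ _ => hv⟩
  choose pick hpick using hpick
  refine ⟨Finset.univ.sup fun i => (pick i).length, fun u ⟨v, hv⟩ => ?_⟩
  obtain ⟨i, hu, hv⟩ := Set.mem_iUnion.mp hv
  exact ⟨pick i, Finset.le_sup (f := fun i => (pick i).length) (Finset.mem_univ i),
    Set.mem_iUnion.mpr ⟨i, hu, hpick i v hv⟩⟩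

end Sync

/-- a rational relation `R` has a uniformization by a recognizable relation iff
there is a bound `n` such that every `u ∈ dom(R)` has an output `v` with `|v| ≤ n` and
`(u,v) ∈ R`. -/
theorem stmt18 {σ γ : Type} (R : Set (List σ × List γ))
    (hrat : ∃ L : Set (List (σ ⊕ γ)), IsReg L ∧ syncRel L = R) :
    (∃ n : ℕ, ∀ u ∈ rdom R, ∃ v, v.length ≤ n ∧ (u, v) ∈ R) ↔
    (∃ Rf, Recognizable Rf ∧ Rf ⊆ R ∧ ∀ u ∈ rdom R, ∃! v, (u, v) ∈ Rf) := by
  obtain ⟨L, hL, rfl⟩ := hrat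
  constructor
  · rintro ⟨n, hn⟩
    obtain ⟨r, hr, hmap⟩ := exists_finite_range_map_mem_syncRel hL
    have := hr.to_subtype
    refine exists_recognizable_uniformization_of_finite_cover
      (List.map Subtype.val '' {l : List (Set.range r) | l.length ≤ n})
      ((List.finite_length_le _ n).image _) (fun w _ => isReg_fiber hL w) fun u hu => ?_
    obtain ⟨v, hlen, huv⟩ := hn u hu
    refine ⟨v.map r, ⟨v.map (Set.rangeFactorization r), by simpa using hlen, ?_⟩, hmap huv⟩
    simp
  · rintro ⟨Rf, hRf, hsub, huniq⟩
    obtain ⟨n, hn⟩ := hRf.exists_length_le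
    refine ⟨n, fun u hu => ?_⟩
    obtain ⟨v, hv, -⟩ := huniq u hu
    obtain ⟨v', hlen, hv'⟩ := hn u ⟨v, hv⟩
    exact ⟨v', hlen, hsub hv'⟩
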